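/- arXiv:1101.3455 — 2 statements merged into one kernel-verified Lean document; each statement's English description precedes it below -/
import Mathlib

section
/- For integers n, p, m (with the identity interpreted as polynomial identity in q, or for q > 1), C_q(n−p, m) = ∑_{k=0}^{m} (−1)^k q^{−mp + binom(k,2)} C_q(p,k) C_q(n−k, m−k). -/
/-- The Gaussian binomial coefficient `C_q(a,k)`, extended to integer arguments,
with value `0` when `k < 0`. -/
noncomputable def gbinom (q : ℝ) (a k : ℤ) : ℝ :=
  if k < 0 then 0
  else ∏ i ∈ Finset.range k.toNat, (q ^ (a - k + i + 1) - 1) / (q ^ ((i : ℤ) + 1) - 1)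

/-! Let `T(p, n, m)` be the sum without the factor `q^{-mp}`. Splitting `C_q(p+1, k+1)` by
q-Pascal, `C_q(p+1, k+1) = q^{p-k} C_q(p, k) + C_q(p, k+1)`, and shifting the index gives
`T(p+1, n, m+1) = T(p, n, m+1) - q^p T(p, n-1, m)`. The closed form `q^{mp} C_q(n-p, m)` satisfies
the same recurrence by the other q-Pascal rule. Both agree at `m = 0` and at `p = 0` (where only
`k = 0` survives, as `C_q(0, k) = 0` for `k > 0`); since the recurrence can be solved for its
`p`-term as well as for its `(p+1)`-term, they agree for all integers `p`. -/

open Finset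

lemma gbinom_natCast (q : ℝ) (a : ℤ) (k : ℕ) :
    gbinom q a k = ∏ i ∈ range k, (q ^ (a - k + i + 1) - 1) / (q ^ ((i : ℤ) + 1) - 1) := by
  simp [gbinom]

lemma gbinom_zero_right (q : ℝ) (a : ℤ) : gbinom q a 0 = 1 := by
  simp [gbinom]

lemma gbinom_succ (q : ℝ) (a : ℤ) (k : ℕ) :
    gbinom q a (k + 1) = gbinom q (a - 1) k * (q ^ a - 1) / (q ^ ((k : ℤ) + 1) - 1) := by
  rw [← Nat.cast_succ, gbinom_natCast, gbinom_natCast, prod_range_succ, mul_div_assoc]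
  push_cast
  congr 2
  · ext i
    ring_nf
  · ring_nf

lemma gbinom_zero_left_succ (q : ℝ) (k : ℕ) : gbinom q 0 (k + 1) = 0 := by
  simp [gbinom_succ]

lemma gbinom_mul_zpow_sub_one (q : ℝ) (k : ℕ) (a : ℤ) :
    gbinom q a k * (q ^ (a - k) - 1) = gbinom q (a - 1) k * (q ^ a - 1) := by
  induction k generalizing a with
  | zero => simp [gbinom_zero_right]
  | succ k ih =>
    push_cast
    rw [gbinom_succ, gbinom_succ, div_mul_eq_mul_div, div_mul_eq_mul_div,
      show a - (k + 1) = a - 1 - k by ring]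
    congr 1
    linear_combination (q ^ a - 1) * ih (a - 1)

lemma gbinom_pascal {q : ℝ} (hq₀ : q ≠ 0) {k : ℕ} (hk : q ^ (k + 1) ≠ 1) (a : ℤ) :
    gbinom q a (k + 1) = gbinom q (a - 1) k + q ^ ((k : ℤ) + 1) * gbinom q (a - 1) (k + 1) := by
  have hden : q ^ ((k : ℤ) + 1) - 1 ≠ 0 := by
    rw [← Nat.cast_succ, zpow_natCast]; exact sub_ne_zero.2 hk
  have hpow : q ^ ((k : ℤ) + 1) * q ^ (a - 1 - k) = q ^ a := by
    rw [← zpow_add₀ hq₀]; ring_nf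
  rw [gbinom_succ, gbinom_succ]
  field_simp
  linear_combination
    q ^ ((k : ℤ) + 1) * gbinom_mul_zpow_sub_one q k (a - 1) - gbinom q (a - 1) k * hpow

lemma gbinom_pascal' {q : ℝ} (hq₀ : q ≠ 0) {k : ℕ} (hk : q ^ (k + 1) ≠ 1) (a : ℤ) :
    gbinom q a (k + 1) = q ^ (a - 1 - k) * gbinom q (a - 1) k + gbinom q (a - 1) (k + 1) := by
  have hden : q ^ ((k : ℤ) + 1) - 1 ≠ 0 := by
    rw [← Nat.cast_succ, zpow_natCast]; exact sub_ne_zero.2 hk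
  have hpow : q ^ (a - 1 - k) * q ^ ((k : ℤ) + 1) = q ^ a := by
    rw [← zpow_add₀ hq₀]; ring_nf
  rw [gbinom_succ, gbinom_succ]
  field_simp
  linear_combination gbinom_mul_zpow_sub_one q k (a - 1) - gbinom q (a - 1) k * hpow

noncomputable def qVandermondeTerm (q : ℝ) (p n : ℤ) (m k : ℕ) : ℝ :=
  (-1) ^ k * q ^ (k.choose 2 : ℤ) * gbinom q p k * gbinom q (n - k) ((m : ℤ) - k)

noncomputable def qVandermondeSum (q : ℝ) (p n : ℤ) (m : ℕ) : ℝ :=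
  ∑ k ∈ range (m + 1), qVandermondeTerm q p n m k

lemma qVandermondeTerm_succ_succ {q : ℝ} (hq₀ : q ≠ 0) {k : ℕ} (hk : q ^ (k + 1) ≠ 1)
    (p n : ℤ) (m : ℕ) :
    qVandermondeTerm q (p + 1) n (m + 1) (k + 1) =
      qVandermondeTerm q p n (m + 1) (k + 1) - q ^ p * qVandermondeTerm q p (n - 1) m k := by
  have hchoose : (((k + 1).choose 2 : ℕ) : ℤ) = k.choose 2 + k := by
    rw [Nat.choose_succ_succ, Nat.choose_one_right]; push_cast; ring
  have hpow : q ^ (((k + 1).choose 2 : ℕ) : ℤ) * q ^ (p - k) = q ^ p * q ^ (k.choose 2 : ℤ) := by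
    rw [← zpow_add₀ hq₀, ← zpow_add₀ hq₀, hchoose]; ring_nf
  unfold qVandermondeTerm
  push_cast
  rw [gbinom_pascal' hq₀ hk, add_sub_cancel_right, show n - 1 - k = n - (k + 1) by ring,
    show (m : ℤ) - k = m + 1 - (k + 1) by ring, pow_succ]
  linear_combination
    (-(-1 : ℝ) ^ k * gbinom q p k * gbinom q (n - (k + 1)) (m + 1 - (k + 1))) * hpow

lemma qVandermondeSum_zero_right (q : ℝ) (p n : ℤ) : qVandermondeSum q p n 0 = 1 := by
  simp [qVandermondeSum, qVandermondeTerm, gbinom_zero_right]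

lemma qVandermondeSum_zero_left (q : ℝ) (n : ℤ) (m : ℕ) :
    qVandermondeSum q 0 n m = gbinom q n m := by
  rw [qVandermondeSum, sum_range_succ', sum_eq_zero fun k _ => ?_]
  · simp [qVandermondeTerm, gbinom_zero_right]
  · simp [qVandermondeTerm, gbinom_zero_left_succ]

lemma qVandermondeSum_succ_succ {q : ℝ} (hq₀ : q ≠ 0) (hq : ∀ i : ℕ, q ^ (i + 1) ≠ 1)
    (p n : ℤ) (m : ℕ) :
    qVandermondeSum q (p + 1) n (m + 1) =
      qVandermondeSum q p n (m + 1) - q ^ p * qVandermondeSum q p (n - 1) m := by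
  unfold qVandermondeSum
  rw [sum_range_succ', sum_range_succ' _ (m + 1),
    sum_congr rfl fun k _ => qVandermondeTerm_succ_succ hq₀ (hq k) p n m, sum_sub_distrib, mul_sum]
  have hterm_zero :
      qVandermondeTerm q (p + 1) n (m + 1) 0 = qVandermondeTerm q p n (m + 1) 0 := by
    simp [qVandermondeTerm, gbinom_zero_right]
  rw [hterm_zero]
  ring

theorem eq_of_pascal_recurrence {R : Type*} [CommRing R] {f g : ℤ → ℤ → ℕ → R} (c : ℤ → R)
    (hf : ∀ p n m, f (p + 1) n (m + 1) = f p n (m + 1) - c p * f p (n - 1) m)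
    (hg : ∀ p n m, g (p + 1) n (m + 1) = g p n (m + 1) - c p * g p (n - 1) m)
    (hp₀ : ∀ n m, f 0 n m = g 0 n m) (hm₀ : ∀ p n, f p n 0 = g p n 0) (p n : ℤ) (m : ℕ) :
    f p n m = g p n m := by
  induction p using Int.induction_on generalizing n m with
  | zero => exact hp₀ n m
  | succ p ih =>
    cases m with
    | zero => exact hm₀ _ n
    | succ m => rw [hf, hg, ih, ih]
  | pred p ih =>
    induction m generalizing n with
    | zero => exact hm₀ _ n
    | succ m ihm =>
      have hf' := hf (-p - 1) n m
      have hg' := hg (-p - 1) n m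
      rw [sub_add_cancel] at hf' hg'
      linear_combination -hf' + hg' + ih n (m + 1) + c (-p - 1) * ihm (n - 1)

lemma zpow_mul_gbinom_succ_succ {q : ℝ} (hq₀ : q ≠ 0) {m : ℕ} (hm : q ^ (m + 1) ≠ 1) (p n : ℤ) :
    q ^ (((m + 1 : ℕ) : ℤ) * (p + 1)) * gbinom q (n - (p + 1)) (m + 1 : ℕ) =
      q ^ (((m + 1 : ℕ) : ℤ) * p) * gbinom q (n - p) (m + 1 : ℕ) -
        q ^ p * (q ^ ((m : ℤ) * p) * gbinom q (n - 1 - p) m) := by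
  have hpow₁ : q ^ (((m : ℤ) + 1) * (p + 1)) = q ^ (((m : ℤ) + 1) * p) * q ^ ((m : ℤ) + 1) := by
    rw [← zpow_add₀ hq₀]; ring_nf
  have hpow₂ : q ^ p * q ^ ((m : ℤ) * p) = q ^ (((m : ℤ) + 1) * p) := by
    rw [← zpow_add₀ hq₀]; ring_nf
  push_cast
  rw [show n - (p + 1) = n - p - 1 by ring, show n - 1 - p = n - p - 1 by ring,
    gbinom_pascal hq₀ hm (n - p)]
  linear_combination gbinom q (n - p - 1) ((m : ℤ) + 1) * hpow₁ + gbinom q (n - p - 1) m * hpow₂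

theorem stmt9 (q : ℝ) (hq : 1 < q) (n p : ℤ) (m : ℕ) :
    gbinom q (n - p) m =
      ∑ k ∈ Finset.range (m + 1),
        (-1 : ℝ) ^ k * q ^ (-((m : ℤ) * p) + (k.choose 2 : ℤ)) *
          gbinom q p k * gbinom q (n - k) ((m : ℤ) - k) := by
  have hq₀ : q ≠ 0 := by positivity
  have hq₁ : ∀ i : ℕ, q ^ (i + 1) ≠ 1 := fun i => (one_lt_pow₀ hq i.succ_ne_zero).ne'
  have hsum : qVandermondeSum q p n m = q ^ ((m : ℤ) * p) * gbinom q (n - p) m :=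
    eq_of_pascal_recurrence (g := fun p n m => q ^ ((m : ℤ) * p) * gbinom q (n - p) m) (q ^ ·)
      (qVandermondeSum_succ_succ hq₀ hq₁) (fun p n m => zpow_mul_gbinom_succ_succ hq₀ (hq₁ m) p n)
      (by simp [qVandermondeSum_zero_left])
      (by simp [qVandermondeSum_zero_right, gbinom_zero_right]) p n m
  calc gbinom q (n - p) m = q ^ (-((m : ℤ) * p)) * qVandermondeSum q p n m := by
        rw [hsum, ← mul_assoc, ← zpow_add₀ hq₀, neg_add_cancel, zpow_zero, one_mul]
    _ = _ := by
        rw [qVandermondeSum, mul_sum]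
        refine sum_congr rfl fun k _ => ?_
        rw [qVandermondeTerm, zpow_add₀ hq₀]
        ring
end

section
/- The generalized Krawtchouk polynomials are orthogonal in the sense that ∑_{k=0}^{min(n,l)} K_k(n,l;q;i) · K_j(n,l;q;k) = q^{nl} · δ_{i,j} for all 0 ≤ i, j ≤ min(n,l). -/
/-- The generalized Krawtchouk polynomial `K_k(n,l;q;x)`. -/
noncomputable def krawtchouk (q : ℝ) (n l : ℕ) (x : ℕ) (k : ℕ) : ℝ :=
  ∑ j ∈ Finset.range (k + 1),
    (-1 : ℝ) ^ (k - j) * q ^ ((j : ℤ) * l + ((k - j).choose 2 : ℤ)) *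
      gbinom q ((n : ℤ) - j) ((n : ℤ) - k) * gbinom q ((n : ℤ) - x) j

/-!
Write the matrix `(K_k(x))_{k, x ≤ n}` as `A D B` with `B_{a,x} = [n-x, a]_q`,
`D = diag(q^{al})` and `A_{k,a} = (-1)^{k-a} q^{binom(k-a,2)} [n-a, n-k]_q`. Gaussian binomial
inversion says that `B A` is the reversal permutation matrix `J`, and `D J D = q^{nl} J`. Hence
`A J` is the inverse of `B`, and `K² = A D J D B = q^{nl} A J B = q^{nl}`: this is the
orthogonality relation with `k` running up to `n`.

When `l < n` the extra terms vanish: by the `q`-Vandermonde identity and the `q`-binomial theorem,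
`K_k(x)` with `x ≤ l` is a combination of the products `∏_{i < k-s} (q^{l-x} - q^i)` with `s ≤ x`,
and for `k > l` each of them has the factor `i = l - x`.
-/

open Finset

section QBinomial

variable {K : Type*} [Field K] {q : K}

/-- The `q`-factorial up to the factor `(q - 1) ^ m`, which cancels in `qBinom`. -/
def qFactorial (q : K) (m : ℕ) : K := ∏ i ∈ range m, (q ^ (i + 1) - 1)

def qBinom (q : K) (m k : ℕ) : K :=
  if k ≤ m then qFactorial q m / (qFactorial q k * qFactorial q (m - k)) else 0

lemma qFactorial_succ (q : K) (m : ℕ) :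
    qFactorial q (m + 1) = qFactorial q m * (q ^ (m + 1) - 1) :=
  prod_range_succ _ _

@[simp]
lemma qFactorial_zero (q : K) : qFactorial q 0 = 1 := prod_range_zero _

lemma qBinom_add_comm (a b : ℕ) : qBinom q (a + b) a = qBinom q (a + b) b := by
  simp [qBinom, mul_comm]

lemma qBinom_of_lt {m k : ℕ} (h : m < k) : qBinom q m k = 0 := by
  simp [qBinom, not_le.2 h]

variable (hq : ¬IsOfFinOrder q)
include hq

lemma pow_succ_sub_one_ne_zero (m : ℕ) : q ^ (m + 1) - 1 ≠ 0 :=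
  sub_ne_zero.2 fun h => hq (isOfFinOrder_iff_pow_eq_one.2 ⟨m + 1, m.succ_pos, h⟩)

lemma qFactorial_ne_zero (m : ℕ) : qFactorial q m ≠ 0 :=
  prod_ne_zero_iff.2 fun i _ => pow_succ_sub_one_ne_zero hq i

lemma qBinom_zero_right (m : ℕ) : qBinom q m 0 = 1 := by
  simp [qBinom, qFactorial_ne_zero hq]

lemma qBinom_self (m : ℕ) : qBinom q m m = 1 := by
  simp [qBinom, qFactorial_ne_zero hq]

lemma qBinom_succ_succ (m k : ℕ) :
    qBinom q (m + 1) (k + 1) = qBinom q m k + q ^ (k + 1) * qBinom q m (k + 1) := by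
  rcases lt_trichotomy k m with hkm | rfl | hmk
  · obtain ⟨d, rfl⟩ := Nat.exists_eq_add_of_lt hkm
    simp only [qBinom, show k + 1 ≤ k + d + 1 + 1 by omega, show k ≤ k + d + 1 by omega,
      show k + 1 ≤ k + d + 1 by omega, if_true, show k + d + 1 + 1 - (k + 1) = d + 1 by omega,
      show k + d + 1 - k = d + 1 by omega, show k + d + 1 - (k + 1) = d by omega, qFactorial_succ]
    field_simp [qFactorial_ne_zero hq, pow_succ_sub_one_ne_zero hq]
    ring
  · simp [qBinom_self hq, qBinom_of_lt (Nat.lt_succ_self k)]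
  · simp [qBinom_of_lt hmk, qBinom_of_lt (Nat.succ_lt_succ hmk),
      qBinom_of_lt (Nat.lt_succ_of_lt hmk)]

lemma qBinom_mul_qBinom {m k j : ℕ} (hjk : j ≤ k) :
    qBinom q m k * qBinom q k j = qBinom q m j * qBinom q (m - j) (k - j) := by
  rcases le_or_gt k m with hkm | hmk
  · simp only [qBinom, hkm, hjk, hjk.trans hkm, Nat.sub_le_sub_right hkm j, if_true,
      show m - j - (k - j) = m - k by omega]
    field_simp [qFactorial_ne_zero hq]
  · rw [qBinom_of_lt hmk, zero_mul]
    rcases le_or_gt j m with hjm | hmj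
    · rw [qBinom_of_lt (by omega : m - j < k - j), mul_zero]
    · rw [qBinom_of_lt hmj, zero_mul]

theorem prod_sub_mul_pow_eq_sum_qBinom (m : ℕ) (z w : K) :
    ∏ i ∈ range m, (z - w * q ^ i) =
      ∑ p ∈ antidiagonal m,
        (-1) ^ p.2 * q ^ p.2.choose 2 * z ^ p.1 * w ^ p.2 * qBinom q m p.1 := by
  induction m with
  | zero => simp [qBinom_self hq]
  | succ m ih =>
    set f : K → ℕ × ℕ → K := fun z p => (-1) ^ p.2 * q ^ p.2.choose 2 * z ^ p.1 * w ^ p.2 *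
      qBinom q m p.1 with hf
    have hshift : ∑ p ∈ antidiagonal (m + 1), f (z * q) p =
        -(w * q ^ m) * ∑ p ∈ antidiagonal m, f z p := by
      rw [Nat.sum_antidiagonal_succ', mul_sum]
      simp only [hf, qBinom_of_lt (Nat.lt_succ_self m), mul_zero, zero_add]
      refine sum_congr rfl fun p hp => ?_
      rw [← mem_antidiagonal.1 hp, Nat.choose_succ_succ', Nat.choose_one_right]
      ring
    have hsplit : ∑ p ∈ antidiagonal (m + 1),
        (-1) ^ p.2 * q ^ p.2.choose 2 * z ^ p.1 * w ^ p.2 * qBinom q (m + 1) p.1 =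
          z * ∑ p ∈ antidiagonal m, f z p + ∑ p ∈ antidiagonal (m + 1), f (z * q) p := by
      rw [Nat.sum_antidiagonal_succ, Nat.sum_antidiagonal_succ (f := f (z * q)), mul_sum,
        ← add_assoc, add_comm _ (f _ _), add_assoc, ← sum_add_distrib]
      congr 1
      · simp [hf, qBinom_zero_right hq]
      refine sum_congr rfl fun p _ => ?_
      rw [qBinom_succ_succ hq]
      simp only [hf]
      ring
    rw [hsplit, hshift, prod_range_succ, ih]
    ring

lemma sum_range_neg_one_pow_mul_qBinom (m : ℕ) (z : K) :
    ∑ t ∈ range (m + 1), (-1) ^ (m - t) * q ^ (m - t).choose 2 * z ^ t * qBinom q m t =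
      ∏ i ∈ range m, (z - q ^ i) := by
  simpa [← Nat.sum_antidiagonal_eq_sum_range_succ (fun t u =>
    (-1) ^ u * q ^ u.choose 2 * z ^ t * qBinom q m t)] using
      (prod_sub_mul_pow_eq_sum_qBinom hq m z 1).symm

theorem sum_range_qBinom_inversion (m b : ℕ) :
    ∑ t ∈ range (m + 1), (-1) ^ (m - t) * q ^ (m - t).choose 2 * qBinom q m t * qBinom q t b =
      if b = m then 1 else 0 := by
  rcases lt_or_ge m b with hmb | hbm
  · rw [if_neg hmb.ne']
    exact sum_eq_zero fun t ht => by
      rw [qBinom_of_lt (m := t) (by rw [mem_range] at ht; omega), mul_zero]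
  obtain ⟨d, rfl⟩ := Nat.exists_eq_add_of_le hbm
  have halt := sum_range_neg_one_pow_mul_qBinom hq d 1
  simp only [one_pow, mul_one] at halt
  rw [show b + d + 1 = b + (d + 1) by ring, sum_range_add,
    sum_eq_zero fun t ht => by rw [qBinom_of_lt (mem_range.1 ht), mul_zero], zero_add]
  calc ∑ s ∈ range (d + 1), (-1) ^ (b + d - (b + s)) * q ^ (b + d - (b + s)).choose 2 *
          qBinom q (b + d) (b + s) * qBinom q (b + s) b
      = qBinom q (b + d) b * ∑ s ∈ range (d + 1),
          (-1) ^ (d - s) * q ^ (d - s).choose 2 * qBinom q d s := by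
        rw [mul_sum]
        refine sum_congr rfl fun s _ => ?_
        rw [mul_assoc, qBinom_mul_qBinom hq (Nat.le_add_right b s)]
        simp only [Nat.add_sub_cancel_left, Nat.add_sub_add_left]
        ring
    _ = if b = b + d then 1 else 0 := by
        rw [halt]
        rcases d with _ | d
        · simp [qBinom_self hq]
        · simp [prod_range_succ']

theorem qBinom_add_eq (m p r : ℕ) :
    qBinom q (m + p) r =
      ∑ u ∈ antidiagonal r, q ^ ((m - u.1) * u.2) * qBinom q m u.1 * qBinom q p u.2 := by
  induction m generalizing r with
  | zero =>
    rcases r with _ | r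
    · simp [qBinom_zero_right hq]
    · simp [Nat.sum_antidiagonal_succ, qBinom_zero_right hq, qBinom_of_lt]
  | succ m ih =>
    rcases r with _ | r
    · simp [qBinom_zero_right hq]
    have hshift : ∀ u ∈ antidiagonal r, q ^ (r + 1) * (q ^ ((m - (u.1 + 1)) * u.2) *
        qBinom q m (u.1 + 1) * qBinom q p u.2) =
          q ^ ((m - u.1) * u.2) * (q ^ (u.1 + 1) * qBinom q m (u.1 + 1)) * qBinom q p u.2 := by
      intro u hu
      rcases lt_or_ge m (u.1 + 1) with hm | hm
      · simp [qBinom_of_lt hm]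
      obtain ⟨e, rfl⟩ := Nat.exists_eq_add_of_le hm
      rw [← mem_antidiagonal.1 hu, Nat.add_sub_cancel_left,
        show u.1 + 1 + e - u.1 = e + 1 by omega]
      ring
    rw [show m + 1 + p = m + p + 1 by ring, qBinom_succ_succ hq, ih, ih,
      Nat.sum_antidiagonal_succ (n := r), Nat.sum_antidiagonal_succ (n := r), mul_add, mul_sum,
      sum_congr rfl hshift]
    simp only [qBinom_succ_succ hq, qBinom_zero_right hq, Nat.sub_zero, Nat.add_sub_add_right]
    simp only [mul_add, add_mul, sum_add_distrib, pow_add]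
    ring

lemma qBinom_mul_qBinom_add_sub (m p a c : ℕ) :
    qBinom q p a * qBinom q (m + p - a) c = ∑ s ∈ range (c + 1),
      q ^ ((m - s) * (c - s)) * qBinom q m s * qBinom q p (a + c - s) * qBinom q (a + c - s) a := by
  have htri : ∀ s ∈ range (c + 1), qBinom q p (a + c - s) * qBinom q (a + c - s) a =
      qBinom q p a * qBinom q (p - a) (c - s) := fun s hs => by
    rw [mem_range] at hs
    rw [qBinom_mul_qBinom hq (by omega), show a + c - s - a = c - s by omega]
  rcases le_or_gt a p with hap | hpa
  · rw [show m + p - a = m + (p - a) by omega, qBinom_add_eq hq,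
      Nat.sum_antidiagonal_eq_sum_range_succ
        (fun s t => q ^ ((m - s) * t) * qBinom q m s * qBinom q (p - a) t), mul_sum]
    refine sum_congr rfl fun s hs => ?_
    rw [mul_assoc _ (qBinom q p _), htri s hs]
    ring
  · rw [qBinom_of_lt hpa, zero_mul]
    refine (sum_eq_zero fun s hs => ?_).symm
    rw [mul_assoc _ (qBinom q p _), htri s hs, qBinom_of_lt hpa]
    ring

end QBinomial

section KrawtchoukMatrix

open Matrix

variable {K : Type*} [Field K] (q : K) (n l : ℕ)

def qBinomMatrix : Matrix (Fin (n + 1)) (Fin (n + 1)) K :=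
  of fun a x => qBinom q (n - x) a

def qBinomInvMatrix : Matrix (Fin (n + 1)) (Fin (n + 1)) K :=
  of fun k a => (-1) ^ ((k : ℕ) - a) * q ^ ((k - a : ℕ).choose 2) * qBinom q (n - a) (n - k)

def krawtchoukMatrix : Matrix (Fin (n + 1)) (Fin (n + 1)) K :=
  qBinomInvMatrix q n * diagonal (fun a : Fin (n + 1) => q ^ ((a : ℕ) * l)) * qBinomMatrix q n

lemma revPerm_permMatrix_apply (a b : Fin (n + 1)) :
    Fin.revPerm.permMatrix K a b = if Fin.rev a = b then 1 else 0 := by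
  simp [Equiv.Perm.permMatrix, PEquiv.toMatrix_apply]

lemma revPerm_permMatrix_mul_self :
    Fin.revPerm.permMatrix K * Fin.revPerm.permMatrix K = (1 : Matrix (Fin (n + 1)) _ K) := by
  rw [← permMatrix_mul, show (Fin.revPerm * Fin.revPerm : Equiv.Perm (Fin (n + 1))) = 1 by
    ext; simp, permMatrix_one]

lemma diagonal_mul_revPerm_permMatrix_mul_diagonal :
    diagonal (fun a : Fin (n + 1) => q ^ ((a : ℕ) * l)) * Fin.revPerm.permMatrix K *
        diagonal (fun a : Fin (n + 1) => q ^ ((a : ℕ) * l)) =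
      q ^ (n * l) • Fin.revPerm.permMatrix K := by
  ext a b
  simp only [mul_diagonal, diagonal_mul, revPerm_permMatrix_apply, Matrix.smul_apply, smul_eq_mul]
  split_ifs with h
  · rw [← h, Fin.val_rev, mul_one, mul_one, ← pow_add, ← add_mul]
    congr 2
    omega
  · simp

variable {q} (hq : ¬IsOfFinOrder q)
include hq

theorem qBinomMatrix_mul_qBinomInvMatrix :
    qBinomMatrix q n * qBinomInvMatrix q n = Fin.revPerm.permMatrix K := by
  ext b a
  rw [revPerm_permMatrix_apply, mul_apply]
  simp only [qBinomMatrix, qBinomInvMatrix, of_apply]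
  have ha := a.is_le
  have hrev : Fin.rev b = a ↔ (b : ℕ) = n - a := by
    simp only [Fin.ext_iff, Fin.val_rev]
    omega
  rw [Fin.sum_univ_eq_sum_range (fun k => qBinom q (n - k) b *
      ((-1) ^ (k - a) * q ^ (k - a : ℕ).choose 2 * qBinom q (n - a) (n - k))),
    ← sum_range_reflect,
    if_congr hrev rfl rfl, ← sum_range_qBinom_inversion hq (n - a)]
  rw [sum_subset (range_subset_range.2 (Nat.succ_le_succ (Nat.sub_le n a)))]
  · refine sum_congr rfl fun t ht => ?_
    rw [mem_range] at ht
    rw [show n + 1 - 1 - t = n - t by omega, show n - (n - t) = t by omega,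
      show n - t - a = n - a - t by omega]
    ring
  · intro t _ ht
    rw [mem_range, not_lt] at ht
    rw [qBinom_of_lt (m := n - a) (by omega), mul_zero, zero_mul]

theorem krawtchoukMatrix_mul_self :
    krawtchoukMatrix q n l * krawtchoukMatrix q n l = q ^ (n * l) • 1 := by
  set A := qBinomInvMatrix q n
  set B := qBinomMatrix q n
  set D := diagonal (fun a : Fin (n + 1) => q ^ ((a : ℕ) * l))
  set J := Fin.revPerm.permMatrix K
  have hAJB : A * J * B = 1 := mul_eq_one_comm.1 <| by
    rw [← Matrix.mul_assoc, qBinomMatrix_mul_qBinomInvMatrix n hq, revPerm_permMatrix_mul_self]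
  calc krawtchoukMatrix q n l * krawtchoukMatrix q n l = A * (D * (B * A) * D) * B := by
        simp only [krawtchoukMatrix, A, B, D, Matrix.mul_assoc]
    _ = q ^ (n * l) • 1 := by
        rw [qBinomMatrix_mul_qBinomInvMatrix n hq, diagonal_mul_revPerm_permMatrix_mul_diagonal,
          Matrix.mul_smul, Matrix.smul_mul, hAJB]

end KrawtchoukMatrix

section Krawtchouk

variable {q : ℝ} (hq : ¬IsOfFinOrder q)
include hq

lemma gbinom_natCast_s16 (m k : ℕ) : gbinom q m k = qBinom q m k := by
  rw [gbinom, if_neg (by omega), Int.toNat_natCast]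
  rcases le_or_gt k m with hkm | hmk
  · obtain ⟨d, rfl⟩ := Nat.exists_eq_add_of_le' hkm
    have hfac : ∀ i ∈ range k,
        (q ^ (((d + k : ℕ) : ℤ) - k + i + 1) - 1) / (q ^ ((i : ℤ) + 1) - 1) =
        (q ^ (d + i + 1) - 1) / (q ^ (i + 1) - 1) := fun i _ => by
      rw [← zpow_natCast, ← zpow_natCast]
      push_cast
      ring_nf
    have hsplit :
        qFactorial q (d + k) = qFactorial q d * ∏ i ∈ range k, (q ^ (d + i + 1) - 1) :=
      prod_range_add _ d k
    rw [prod_congr rfl hfac, prod_div_distrib, qBinom, if_pos hkm, Nat.add_sub_cancel, hsplit]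
    have := qFactorial_ne_zero hq d
    have := qFactorial_ne_zero hq k
    change _ / qFactorial q k = _
    field_simp
  · rw [qBinom_of_lt hmk]
    refine prod_eq_zero (i := k - m - 1) (mem_range.2 (by omega)) ?_
    rw [show (m : ℤ) - k + (k - m - 1 : ℕ) + 1 = 0 by omega, zpow_zero, sub_self, zero_div]

lemma krawtchouk_eq_sum {n x k : ℕ} (l : ℕ) (hx : x ≤ n) (hk : k ≤ n) :
    krawtchouk q n l x k = ∑ a ∈ range (k + 1),
      (-1) ^ (k - a) * q ^ (a * l + (k - a).choose 2) * qBinom q (n - a) (n - k) *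
        qBinom q (n - x) a := by
  refine sum_congr rfl fun a ha => ?_
  rw [mem_range] at ha
  rw [← Nat.cast_sub (by omega : a ≤ n), ← Nat.cast_sub hk, ← Nat.cast_sub hx,
    gbinom_natCast_s16 hq, gbinom_natCast_s16 hq, ← zpow_natCast]
  rfl

open Matrix in
lemma krawtchoukMatrix_apply (n l : ℕ) (k x : Fin (n + 1)) :
    krawtchoukMatrix q n l k x = krawtchouk q n l x k := by
  rw [krawtchouk_eq_sum hq l x.is_le k.is_le, krawtchoukMatrix, mul_apply]
  simp only [mul_diagonal, qBinomMatrix, qBinomInvMatrix, of_apply]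
  rw [Fin.sum_univ_eq_sum_range (fun a => (-1) ^ (k - a : ℕ) * q ^ (k - a : ℕ).choose 2 *
    qBinom q (n - a) (n - k) * q ^ (a * l) * qBinom q (n - x) a) (n + 1)]
  symm
  rw [sum_subset (range_subset_range.2 (Nat.succ_le_succ k.is_le))]
  · refine sum_congr rfl fun a _ => ?_
    ring
  · intro a ha hak
    rw [mem_range] at ha hak
    rw [qBinom_of_lt (m := n - a) (by omega), mul_zero, zero_mul]

theorem sum_range_krawtchouk_mul_krawtchouk {n i j : ℕ} (l : ℕ)
    (hi : i ≤ n) (hj : j ≤ n) :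
    ∑ k ∈ range (n + 1), krawtchouk q n l i k * krawtchouk q n l k j =
      q ^ (n * l) * if i = j then 1 else 0 := by
  have h := congrFun (congrFun (krawtchoukMatrix_mul_self n l hq) ⟨j, by omega⟩)
    ⟨i, by omega⟩
  simp only [Matrix.mul_apply, Matrix.smul_apply, Matrix.one_apply, Fin.mk.injEq, smul_eq_mul,
    krawtchoukMatrix_apply hq] at h
  rw [← Fin.sum_univ_eq_sum_range (fun k => krawtchouk q n l i k * krawtchouk q n l k j)]
  simpa only [mul_comm, eq_comm] using h

theorem krawtchouk_eq_sum_prod {n l x k : ℕ} (hxl : x ≤ l) (hxn : x ≤ n)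
    (hkn : k ≤ n) :
    krawtchouk q n l x k = ∑ s ∈ range (k + 1), (-1) ^ s * q ^ ((k - s) * x + s.choose 2) *
      qBinom q x s * qBinom q (n - x) (k - s) * ∏ i ∈ range (k - s), (q ^ (l - x) - q ^ i) := by
  obtain ⟨r, rfl⟩ := Nat.exists_eq_add_of_le hxl
  set G : ℕ → ℕ → ℝ := fun a s => (-1) ^ (k - a) * q ^ (a * (x + r) + (k - a).choose 2) *
    (q ^ ((x - s) * (k - a - s)) * qBinom q x s * qBinom q (n - x) (k - s) *
      qBinom q (k - s) a) with hG
  have hvandermonde : ∀ a ∈ range (k + 1),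
      (-1) ^ (k - a) * q ^ (a * (x + r) + (k - a).choose 2) * qBinom q (n - a) (n - k) *
        qBinom q (n - x) a = ∑ s ∈ range (k - a + 1), G a s := fun a ha => by
    rw [mem_range] at ha
    rw [show n - a = (n - k) + (k - a) by omega, qBinom_add_comm,
      show n - k + (k - a) = x + (n - x) - a by omega, mul_assoc, mul_comm (qBinom q _ _),
      qBinom_mul_qBinom_add_sub hq, show a + (k - a) = k by omega, mul_sum]
  have hbinomial : ∀ s ∈ range (k + 1), ∑ a ∈ range (k - s + 1), G a s =
      (-1) ^ s * q ^ ((k - s) * x + s.choose 2) * qBinom q x s * qBinom q (n - x) (k - s) *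
        ∏ i ∈ range (k - s), (q ^ (x + r - x) - q ^ i) := fun s hs => by
    rw [mem_range] at hs
    rcases lt_or_ge x s with hxs | hsx
    · rw [qBinom_of_lt hxs, mul_zero, zero_mul, zero_mul]
      exact sum_eq_zero fun a _ => by simp only [hG, qBinom_of_lt hxs, mul_zero, zero_mul]
    obtain ⟨e, rfl⟩ := Nat.exists_eq_add_of_le hsx
    obtain ⟨M, rfl⟩ := Nat.exists_eq_add_of_le (Nat.le_of_lt_succ hs)
    rw [Nat.add_sub_cancel_left, Nat.add_sub_cancel_left, ← sum_range_neg_one_pow_mul_qBinom hq,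
      mul_sum]
    refine sum_congr rfl fun a ha => ?_
    obtain ⟨b, rfl⟩ := Nat.exists_eq_add_of_le (Nat.le_of_lt_succ (mem_range.1 ha))
    have hchoose : (s + b).choose 2 = s.choose 2 + b.choose 2 + s * b := by
      simp [Nat.add_choose_eq, Nat.antidiagonal_succ]
      ring
    simp only [hG, show s + (a + b) - a = s + b by omega, show s + (a + b) - s = a + b by omega,
      Nat.add_sub_cancel_left, show s + b - s = b by omega, hchoose]
    ring
  rw [krawtchouk_eq_sum hq _ hxn hkn, sum_congr rfl hvandermonde,
    sum_comm' (t' := range (k + 1)) (s' := fun s => range (k - s + 1))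
      fun a s => by simp only [mem_range]; omega, sum_congr rfl hbinomial]

theorem krawtchouk_eq_zero_of_lt {n l x k : ℕ} (hxl : x ≤ l) (hlk : l < k)
    (hkn : k ≤ n) : krawtchouk q n l x k = 0 := by
  rw [krawtchouk_eq_sum_prod hq hxl (by omega) hkn]
  refine sum_eq_zero fun s hs => ?_
  rcases lt_or_ge x s with hxs | hsx
  · rw [qBinom_of_lt hxs, mul_zero, zero_mul, zero_mul]
  · rw [prod_eq_zero (i := l - x) (mem_range.2 (by omega)) (sub_self _), mul_zero]

end Krawtchouk

theorem stmt16 (q : ℝ) (hq : 1 < q) (n l i j : ℕ)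
    (hi : i ≤ min n l) (hj : j ≤ min n l) :
    ∑ k ∈ Finset.range (min n l + 1), krawtchouk q n l i k * krawtchouk q n l k j =
      q ^ ((n : ℤ) * l) * (if i = j then 1 else 0) := by
  have hq' : ¬IsOfFinOrder q :=
    not_isOfFinOrder_of_injective_pow (pow_right_strictMono₀ hq).injective
  rw [show (n : ℤ) * l = (n * l : ℕ) by push_cast; rfl, zpow_natCast,
    ← sum_range_krawtchouk_mul_krawtchouk hq' l (hi.trans (min_le_left n l))
      (hj.trans (min_le_left n l))]
  refine sum_subset (range_subset_range.2 (by omega)) fun k hk hkl => ?_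
  rw [mem_range] at hk hkl
  rw [krawtchouk_eq_zero_of_lt hq' (hi.trans (min_le_right n l)) (by omega) (by omega), zero_mul]
end
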